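/- Let 2 < p < ∞ be real and let r satisfy 1/r = 1/2 + 1/p. There exists a constant K ≥ 1 (one may take Grothendieck's constant K_G) such that: for every m ∈ ℕ, all real scalars λ_1, …, λ_m, every n ∈ ℕ and all continuous linear functionals x_1*, …, x_n* on ℓ_p satisfying sup_{‖x‖ ≤ 1} ∑_{k=1}^n |x_k*(x)| ≤ 1, one has ∑_{k=1}^n | ∑_{i=1}^m λ_i |x_k*(e_i)| | ≤ K · (∑_{i=1}^m |λ_i|^r)^{1/r}. -/

import Mathlib

/-!
With `a k i = |x_k*(e_i)|` and column sums `d i = ∑ k, a k i`, the left-hand side is at most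
`∑ i, |λ i| d i`, so by Hölder it suffices to bound `‖d‖_q` for the exponent `q` conjugate to `r`,
i.e. `1/q = 1/2 - 1/p`. Testing the hypothesis on the sign vectors `∑ i, ± t i e_i`, whose norm is
`‖t‖_p`, and averaging over all signs with Khintchine's inequality (constant `√3`, obtained from
the fourth moment) gives `∑ k, (∑ i, (t i a k i)²)^(1/2) ≤ √3 ‖t‖_p`. Choosing `t = d^((q-2)/2)`
and applying Cauchy–Schwarz to `‖d‖_q^q = ∑ k, ∑ i, d i^(q-1) a k i` then gives `‖d‖_q ≤ √3`,
so `K = √3` works.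
-/

open Finset
open scoped ENNReal

def boolSign (b : Bool) : ℝ := if b then 1 else -1

lemma abs_boolSign (b : Bool) : |boolSign b| = 1 := by cases b <;> simp [boolSign]

def rademacherSum {m : ℕ} (c : Fin m → ℝ) (ε : Fin m → Bool) : ℝ := ∑ i, boolSign (ε i) * c i

lemma card_signVectors (m : ℕ) : (Fintype.card (Fin m → Bool) : ℝ) = 2 ^ m := by simp

lemma sum_rademacherSum_succ {m : ℕ} (F : ℝ → ℝ) (c : Fin (m + 1) → ℝ) :
    ∑ ε, F (rademacherSum c ε) =
      ∑ ε, (F (c 0 + rademacherSum (Fin.tail c) ε) + F (-c 0 + rademacherSum (Fin.tail c) ε)) := by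
  rw [← (Fin.consEquiv fun _ => Bool).sum_comp, Fintype.sum_prod_type, Fintype.sum_bool,
    ← sum_add_distrib]
  simp [rademacherSum, Fin.sum_univ_succ, boolSign, Fin.tail]

lemma sum_rademacherSum_sq {m : ℕ} (c : Fin m → ℝ) :
    ∑ ε, rademacherSum c ε ^ 2 = 2 ^ m * ∑ i, c i ^ 2 := by
  induction m with
  | zero => simp [rademacherSum]
  | succ m ih =>
    have hexpand : ∀ y : ℝ, (c 0 + y) ^ 2 + (-c 0 + y) ^ 2 = 2 * y ^ 2 + 2 * c 0 ^ 2 :=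
      fun y => by ring
    rw [sum_rademacherSum_succ (· ^ 2), Fin.sum_univ_succ]
    simp only [hexpand, sum_add_distrib, ← mul_sum, ih, sum_const, card_univ, nsmul_eq_mul,
      card_signVectors, Fin.tail]
    ring

lemma sum_rademacherSum_pow_four_le {m : ℕ} (c : Fin m → ℝ) :
    ∑ ε, rademacherSum c ε ^ 4 ≤ 3 * 2 ^ m * (∑ i, c i ^ 2) ^ 2 := by
  induction m with
  | zero => simp [rademacherSum]
  | succ m ih =>
    have hexpand : ∀ y : ℝ, (c 0 + y) ^ 4 + (-c 0 + y) ^ 4 =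
        2 * y ^ 4 + 12 * c 0 ^ 2 * y ^ 2 + 2 * c 0 ^ 4 := fun y => by ring
    rw [sum_rademacherSum_succ (· ^ 4), Fin.sum_univ_succ]
    simp only [hexpand, sum_add_distrib, ← mul_sum, sum_rademacherSum_sq, sum_const, card_univ,
      nsmul_eq_mul, card_signVectors]
    have ih_tail := ih (Fin.tail c)
    have htail : 0 ≤ ∑ i, Fin.tail c i ^ 2 := sum_nonneg fun _ _ => sq_nonneg _
    have h2 : (0 : ℝ) < 2 ^ m := by positivity
    simp only [Fin.tail] at ih_tail htail ⊢
    rw [pow_succ (2 : ℝ) m]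
    nlinarith [mul_nonneg (mul_nonneg h2.le (sq_nonneg (c 0))) htail,
      mul_nonneg h2.le (pow_nonneg (sq_nonneg (c 0)) 2)]

-- Interpolating the second moment between the first and the fourth, by Cauchy–Schwarz twice.
lemma sum_sq_pow_three_le {ι : Type*} (s : Finset ι) (X : ι → ℝ) :
    (∑ i ∈ s, X i ^ 2) ^ 3 ≤ (∑ i ∈ s, |X i|) ^ 2 * ∑ i ∈ s, X i ^ 4 := by
  set A := ∑ i ∈ s, |X i|
  set B := ∑ i ∈ s, X i ^ 2
  set C := ∑ i ∈ s, X i ^ 4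
  set T := ∑ i ∈ s, |X i| ^ 3
  have hBAT : B ^ 2 ≤ A * T := by
    have hsqrt : ∀ i, √|X i| * √|X i| = |X i| := fun i => Real.mul_self_sqrt (abs_nonneg _)
    have hprod : ∀ i, √|X i| * (√|X i| * |X i|) = X i ^ 2 := fun i => by
      rw [← mul_assoc, hsqrt, ← sq, sq_abs]
    have hleft : ∀ i, √|X i| ^ 2 = |X i| := fun i => by rw [sq, hsqrt]
    have hright : ∀ i, (√|X i| * |X i|) ^ 2 = |X i| ^ 3 := fun i => by
      rw [mul_pow, hleft]; ring
    calc B ^ 2 = (∑ i ∈ s, √|X i| * (√|X i| * |X i|)) ^ 2 := by simp only [hprod, B]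
      _ ≤ (∑ i ∈ s, √|X i| ^ 2) * ∑ i ∈ s, (√|X i| * |X i|) ^ 2 :=
        sum_mul_sq_le_sq_mul_sq s _ _
      _ = A * T := by simp only [hleft, hright, A, T]
  have hTBC : T ^ 2 ≤ B * C := by
    have hprod : ∀ i, |X i| * X i ^ 2 = |X i| ^ 3 := fun i => by rw [← sq_abs (X i)]; ring
    calc T ^ 2 = (∑ i ∈ s, |X i| * X i ^ 2) ^ 2 := by simp only [hprod, T]
      _ ≤ (∑ i ∈ s, |X i| ^ 2) * ∑ i ∈ s, (X i ^ 2) ^ 2 := sum_mul_sq_le_sq_mul_sq s _ _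
      _ = B * C := by simp only [sq_abs, ← pow_mul, B, C]
  have hB : 0 ≤ B := sum_nonneg fun i _ => sq_nonneg (X i)
  have hC : 0 ≤ C := sum_nonneg fun i _ => by positivity
  rcases hB.eq_or_lt with hB | hB
  · rw [← hB, zero_pow three_ne_zero]
    positivity
  · refine le_of_mul_le_mul_left ?_ hB
    calc B * B ^ 3 = (B ^ 2) ^ 2 := by ring
      _ ≤ (A * T) ^ 2 := pow_le_pow_left₀ (sq_nonneg B) hBAT 2
      _ = A ^ 2 * T ^ 2 := by ring
      _ ≤ A ^ 2 * (B * C) := by gcongr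
      _ = B * (A ^ 2 * C) := by ring

theorem khintchine_sqrt_three {m : ℕ} (c : Fin m → ℝ) :
    √(∑ i, c i ^ 2) * 2 ^ m ≤ √3 * ∑ ε, |rademacherSum c ε| := by
  set s := ∑ i, c i ^ 2
  set A := ∑ ε, |rademacherSum c ε|
  have hs : 0 ≤ s := sum_nonneg fun i _ => sq_nonneg (c i)
  have hmoments : (2 ^ m * s) ^ 3 ≤ A ^ 2 * (3 * 2 ^ m * s ^ 2) := by
    rw [← sum_rademacherSum_sq]
    exact (sum_sq_pow_three_le univ _).trans (by gcongr; exact sum_rademacherSum_pow_four_le c)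
  have hsq : s * (2 ^ m) ^ 2 ≤ 3 * A ^ 2 := by
    rcases hs.eq_or_lt with hs0 | hs0
    · rw [← hs0, zero_mul]; positivity
    · refine le_of_mul_le_mul_left ?_ (by positivity : (0 : ℝ) < 2 ^ m * s ^ 2)
      linarith
  rw [← pow_le_pow_iff_left₀ (by positivity) (by positivity) two_ne_zero, mul_pow, mul_pow,
    Real.sq_sqrt hs, Real.sq_sqrt zero_le_three]
  exact hsq

theorem sum_sqrt_sum_sq_le_of_rademacherSum_le {κ : Type*} [Fintype κ] {m : ℕ}
    (b : κ → Fin m → ℝ) {M : ℝ} (h : ∀ ε, ∑ k, |rademacherSum (b k) ε| ≤ M) :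
    ∑ k, √(∑ i, b k i ^ 2) ≤ √3 * M := by
  refine le_of_mul_le_mul_right ?_ (by positivity : (0 : ℝ) < 2 ^ m)
  calc (∑ k, √(∑ i, b k i ^ 2)) * 2 ^ m
      ≤ ∑ k, √3 * ∑ ε, |rademacherSum (b k) ε| := by
        rw [sum_mul]; exact sum_le_sum fun k _ => khintchine_sqrt_three (b k)
    _ = √3 * ∑ ε, ∑ k, |rademacherSum (b k) ε| := by rw [← mul_sum, sum_comm]
    _ ≤ √3 * ∑ _ε : Fin m → Bool, M := by gcongr with ε; exact h ε
    _ = √3 * M * 2 ^ m := by rw [sum_const, card_univ, nsmul_eq_mul, card_signVectors]; ring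

theorem sum_rpow_sum_le_of_sum_sqrt_le {ι κ : Type*} [Fintype ι] [Fintype κ] {p q C : ℝ}
    (hq : 2 < q) (hpq : 1 / p + 1 / q = 1 / 2) (hC : 0 ≤ C) (a : κ → ι → ℝ)
    (ha : ∀ k i, 0 ≤ a k i)
    (h : ∀ t : ι → ℝ, ∑ k, √(∑ i, (t i * a k i) ^ 2) ≤ C * (∑ i, |t i| ^ p) ^ (1 / p)) :
    (∑ i, (∑ k, a k i) ^ q) ^ (1 / q) ≤ C := by
  set d : ι → ℝ := fun i => ∑ k, a k i
  set t : ι → ℝ := fun i => d i ^ ((q - 2) / 2)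
  set S := ∑ i, d i ^ q
  have hd : ∀ i, 0 ≤ d i := fun i => sum_nonneg fun k _ => ha k i
  have hS : 0 ≤ S := sum_nonneg fun i _ => Real.rpow_nonneg (hd i) q
  have hp : (q - 2) / 2 * p = q := by
    have hp_eq : p = 2 * q / (q - 2) := by
      rw [← one_div_one_div p, eq_sub_of_add_eq hpq]; field_simp
    rw [hp_eq]; field_simp [(by linarith : q - 2 ≠ 0)]
  have ht_rpow : ∀ i, |t i| ^ p = d i ^ q := fun i => by
    rw [abs_of_nonneg (Real.rpow_nonneg (hd i) _), ← Real.rpow_mul (hd i), hp]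
  have ht_mul : ∀ i, t i * d i ^ (q / 2) * d i = d i ^ q := fun i => by
    rw [← Real.rpow_add' (hd i) (by linarith), ← Real.rpow_add_one' (hd i) (by linarith)]
    ring_nf
  have hhalf_sq : ∀ i, (d i ^ (q / 2)) ^ 2 = d i ^ q := fun i => by
    rw [← Real.rpow_natCast, ← Real.rpow_mul (hd i)]; ring_nf
  have hS_le : S ≤ C * S ^ (1 / p) * √S := by
    calc S = ∑ k, ∑ i, (t i * a k i) * d i ^ (q / 2) := by
          rw [sum_comm]; refine sum_congr rfl fun i _ => ?_
          rw [← ht_mul, ← sum_mul, ← mul_sum]; ring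
      _ ≤ ∑ k, √(∑ i, (t i * a k i) ^ 2) * √S := by
          gcongr with k
          simpa only [hhalf_sq] using
            Real.sum_mul_le_sqrt_mul_sqrt univ (fun i => t i * a k i) (fun i => d i ^ (q / 2))
      _ ≤ C * S ^ (1 / p) * √S := by
          rw [← sum_mul]; gcongr
          simpa only [ht_rpow] using h t
  rcases hS.eq_or_lt with hS0 | hS0
  · rw [← hS0, Real.zero_rpow (by positivity)]; exact hC
  · have hsplit : S = S ^ (1 / q) * (S ^ (1 / p) * √S) := by
      rw [Real.sqrt_eq_rpow, ← Real.rpow_add hS0, ← Real.rpow_add hS0,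
        show 1 / q + (1 / p + 1 / 2) = 1 by linarith, Real.rpow_one]
    refine le_of_mul_le_mul_right ?_ (by positivity : 0 < S ^ (1 / p) * √S)
    rw [← hsplit]; linarith

theorem sum_abs_le_norm_of_sum_abs_le_one {E κ : Type*} [NormedAddCommGroup E] [NormedSpace ℝ E]
    [Fintype κ] (f : κ → E →L[ℝ] ℝ) (h : ∀ x, ‖x‖ ≤ 1 → ∑ k, |f k x| ≤ 1) (x : E) :
    ∑ k, |f k x| ≤ ‖x‖ := by
  rcases eq_or_ne x 0 with rfl | hx
  · simp
  have hx : 0 < ‖x‖ := norm_pos_iff.mpr hx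
  have hunit := h (‖x‖⁻¹ • x) (by rw [norm_smul, norm_inv, norm_norm, inv_mul_cancel₀ hx.ne'])
  simp only [map_smul, smul_eq_mul, abs_mul, abs_inv, abs_norm, ← mul_sum] at hunit
  rwa [inv_mul_le_iff₀ hx, mul_one] at hunit

theorem lp.norm_sum_single_fin {p : ℝ≥0∞} [Fact (1 ≤ p)] (hp : 0 < p.toReal) {m : ℕ}
    (g : Fin m → ℝ) :
    ‖∑ i : Fin m, (lp.single p (i : ℕ) (g i) : lp (fun _ : ℕ => ℝ) p)‖ =
      (∑ i, |g i| ^ p.toReal) ^ (1 / p.toReal) := by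
  have h := lp.norm_sum_single hp (Function.extend Fin.val g 0)
    (univ.map (Fin.valEmbedding (n := m)))
  simp only [sum_map, Fin.valEmbedding_apply, Fin.val_injective.extend_apply,
    Real.norm_eq_abs] at h
  rw [← h, one_div, Real.rpow_rpow_inv (norm_nonneg _) hp.ne']

theorem sum_sqrt_sum_sq_apply_single_le {p : ℝ≥0∞} [Fact (1 ≤ p)] (hp : 0 < p.toReal)
    {κ : Type*} [Fintype κ] {m : ℕ} (f : κ → lp (fun _ : ℕ => ℝ) p →L[ℝ] ℝ)
    (hf : ∀ x, ∑ k, |f k x| ≤ ‖x‖) (t : Fin m → ℝ) :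
    ∑ k, √(∑ i, (t i * |f k (lp.single p (i : ℕ) 1)|) ^ 2) ≤
      √3 * (∑ i, |t i| ^ p.toReal) ^ (1 / p.toReal) := by
  have hsq : ∀ a b : ℝ, (a * |b|) ^ 2 = (a * b) ^ 2 := fun a b => by
    rw [mul_pow, mul_pow, sq_abs]
  simp only [hsq]
  refine sum_sqrt_sum_sq_le_of_rademacherSum_le _ fun ε => ?_
  set x : lp (fun _ : ℕ => ℝ) p := ∑ i : Fin m, lp.single p (i : ℕ) (boolSign (ε i) * t i)
  have hx : ∀ k, f k x = rademacherSum (fun i => t i * f k (lp.single p (i : ℕ) 1)) ε := by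
    intro k
    simp only [x, rademacherSum, map_sum]
    refine sum_congr rfl fun i _ => ?_
    rw [← mul_one (boolSign (ε i) * t i), ← smul_eq_mul, lp.single_smul, map_smul, smul_eq_mul,
      mul_assoc]
  calc ∑ k, |rademacherSum (fun i => t i * f k (lp.single p (i : ℕ) 1)) ε|
      = ∑ k, |f k x| := by simp only [hx]
    _ ≤ ‖x‖ := hf x
    _ = (∑ i, |t i| ^ p.toReal) ^ (1 / p.toReal) := by
      simp only [x, lp.norm_sum_single_fin hp, abs_mul, abs_boolSign, one_mul]

/-- **Theorem 3.3, upper estimate.** For `2 < p < ∞` and `1/r = 1/2 + 1/p`, there is `K ≥ 1`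
such that for all scalars `λ_1, …, λ_m` and every finite family `x_1*, …, x_n*` of
functionals on `ℓ_p` with `sup_{‖x‖≤1} ∑_k |x_k*(x)| ≤ 1`, one has
`∑_k |∑_i λ_i |x_k*(e_i)|| ≤ K (∑_i |λ_i|^r)^(1/r)`.  This is the estimate
`‖∑ λ_i |δ_{e_i}|‖_{FBL[ℓ_p]} ≤ K (∑ |λ_i|^r)^(1/r)` written via the explicit formula
for the free Banach lattice norm. -/
theorem fbl_lp_abs_upper (p r : ℝ) (hp : 2 < p) (hr : 1 / r = 1 / 2 + 1 / p)
    [Fact (1 ≤ ENNReal.ofReal p)] :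
    ∃ K : ℝ, 1 ≤ K ∧
      ∀ (m : ℕ) (lam : Fin m → ℝ) (n : ℕ)
        (xs : Fin n → (lp (fun _ : ℕ => ℝ) (ENNReal.ofReal p) →L[ℝ] ℝ)),
        (∀ x, ‖x‖ ≤ 1 → ∑ k, |xs k x| ≤ 1) →
        ∑ k, abs (∑ i, lam i * |xs k (lp.single (ENNReal.ofReal p) (i : ℕ) (1 : ℝ))|) ≤
          K * (∑ i, |lam i| ^ r) ^ (1 / r) := by
  have hp0 : 0 < p := by linarith
  set q := 2 * p / (p - 2)
  have hq : 2 < q := by rw [lt_div_iff₀ (by linarith)]; linarith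
  have hpq : 1 / p + 1 / q = 1 / 2 := by simp only [q]; field_simp; ring
  have hrq : r.HolderConjugate q := by
    simpa only [one_div_one_div] using
      Real.holderConjugate_one_div (a := 1 / r) (b := 1 / q) (by rw [hr]; positivity)
        (by positivity) (by rw [hr]; linarith)
  refine ⟨√3, Real.one_le_sqrt.mpr (by norm_num), fun m lam n xs H => ?_⟩
  set a : Fin n → Fin m → ℝ := fun k i => |xs k (lp.single (ENNReal.ofReal p) (i : ℕ) 1)|
  have hcol : (∑ i, (∑ k, a k i) ^ q) ^ (1 / q) ≤ √3 :=
    sum_rpow_sum_le_of_sum_sqrt_le hq hpq (by positivity) a (fun _ _ => abs_nonneg _) fun t => by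
      simpa only [ENNReal.toReal_ofReal hp0.le] using
        sum_sqrt_sum_sq_apply_single_le (by rwa [ENNReal.toReal_ofReal hp0.le]) xs
          (sum_abs_le_norm_of_sum_abs_le_one xs H) t
  calc ∑ k, |∑ i, lam i * a k i| ≤ ∑ k, ∑ i, |lam i| * a k i := by
        gcongr with k
        refine (abs_sum_le_sum_abs _ _).trans_eq (sum_congr rfl fun i _ => ?_)
        rw [abs_mul, abs_abs]
    _ = ∑ i, |lam i| * ∑ k, a k i := by rw [sum_comm]; simp only [mul_sum]
    _ ≤ (∑ i, |lam i| ^ r) ^ (1 / r) * (∑ i, (∑ k, a k i) ^ q) ^ (1 / q) := by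
        simpa only [abs_abs] using Real.inner_le_Lp_mul_Lq_of_nonneg univ hrq
          (fun i _ => abs_nonneg (lam i)) (fun i _ => sum_nonneg fun k _ => abs_nonneg _)
    _ ≤ √3 * (∑ i, |lam i| ^ r) ^ (1 / r) := by rw [mul_comm]; gcongr
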